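/- Fix k ∈ ℕ. In the situation of the support lemma — finite pointed sets X, Y, X', Y'; maps v : X × Y → Fin (k+1), v' : X' × Y' → Fin (k+1) vanishing whenever a coordinate is the base point; subsets A ⊆ X ∖ {0}, B ⊆ Y ∖ {0}, A' ⊆ X' ∖ {0}, B' ⊆ Y' ∖ {0}; base-point-preserving maps f : X → X', g : Y → Y' with v(x,y) = v'(f x, g y) for all x,y, f(A ∪ {0}) = A' ∪ {0}, g(B ∪ {0}) = B' ∪ {0} — assume that S := Support(v,A,B) is nonempty and S' := Support(v',A',B') is nonempty. Set F := {x : ∃ y, (x,y) ∈ S}, G := {y : ∃ x, (x,y) ∈ S}, and define F', G' analogously from S'. Then (F, G, v|_{F×G}) and (F', G', v'|_{F'×G'}) are k-relations, f maps F onto F', g maps G onto G', and the pair of restrictions (f|_F, g|_G) is a morphism of k-relations (F, G, v|_{F×G}) → (F', G', v'|_{F'×G'}). -/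
import Mathlib


/-- The support of `(v, A, B)`: pairs `(x, y) ∈ A × B` where `v` does not vanish. -/
def Support {X Y : Type*} {k : ℕ} (v : X × Y → Fin (k + 1))
    (A : Set X) (B : Set Y) : Set (X × Y) :=
  {p | p.1 ∈ A ∧ p.2 ∈ B ∧ v p ≠ 0}

/-- `(F, G, v|_{F×G})` is a `k`-relation: `F`, `G` nonempty and no identically zero
row or column. -/
def IsKRelOn {X Y : Type*} (k : ℕ) (F : Set X) (G : Set Y)
    (v : X × Y → Fin (k + 1)) : Prop :=
  F.Nonempty ∧ G.Nonempty ∧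
    (∀ x ∈ F, ∃ y ∈ G, v (x, y) ≠ 0) ∧ (∀ y ∈ G, ∃ x ∈ F, v (x, y) ≠ 0)

/-- in the situation of the support lemma, with nonempty supports `S`
and `S'`, the projections `F, G` (resp. `F', G'`) of the supports yield
`k`-relations, and `(f|_F, g|_G)` is a morphism of `k`-relations: `f` maps `F` onto
`F'`, `g` maps `G` onto `G'`, compatibly with `v`, `v'`. -/
theorem stmt4 {k : ℕ} {X Y X' Y' : Type*}
    [Fintype X] [Fintype Y] [Fintype X'] [Fintype Y']
    [Zero X] [Zero Y] [Zero X'] [Zero Y']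
    (v : X × Y → Fin (k + 1)) (v' : X' × Y' → Fin (k + 1))
    (hv : ∀ p : X × Y, p.1 = 0 ∨ p.2 = 0 → v p = 0)
    (hv' : ∀ p : X' × Y', p.1 = 0 ∨ p.2 = 0 → v' p = 0)
    (A : Set X) (B : Set Y) (A' : Set X') (B' : Set Y')
    (hA : A ⊆ {x | x ≠ 0}) (hB : B ⊆ {y | y ≠ 0})
    (hA' : A' ⊆ {x | x ≠ 0}) (hB' : B' ⊆ {y | y ≠ 0})
    (f : X → X') (g : Y → Y') (hf0 : f 0 = 0) (hg0 : g 0 = 0)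
    (hcomm : ∀ (x : X) (y : Y), v (x, y) = v' (f x, g y))
    (hfA : f '' (A ∪ {0}) = A' ∪ {0}) (hgB : g '' (B ∪ {0}) = B' ∪ {0})
    (hS : (Support v A B).Nonempty) (hS' : (Support v' A' B').Nonempty) :
    IsKRelOn k {x | ∃ y, (x, y) ∈ Support v A B} {y | ∃ x, (x, y) ∈ Support v A B} v ∧
    IsKRelOn k {x' | ∃ y', (x', y') ∈ Support v' A' B'}
      {y' | ∃ x', (x', y') ∈ Support v' A' B'} v' ∧
    Set.MapsTo f {x | ∃ y, (x, y) ∈ Support v A B}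
      {x' | ∃ y', (x', y') ∈ Support v' A' B'} ∧
    Set.SurjOn f {x | ∃ y, (x, y) ∈ Support v A B}
      {x' | ∃ y', (x', y') ∈ Support v' A' B'} ∧
    Set.MapsTo g {y | ∃ x, (x, y) ∈ Support v A B}
      {y' | ∃ x', (x', y') ∈ Support v' A' B'} ∧
    Set.SurjOn g {y | ∃ x, (x, y) ∈ Support v A B}
      {y' | ∃ x', (x', y') ∈ Support v' A' B'} ∧
    (∀ x ∈ {x | ∃ y, (x, y) ∈ Support v A B}, ∀ y ∈ {y | ∃ x, (x, y) ∈ Support v A B},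
      v' (f x, g y) = v (x, y)) := by

  -- key: image of support point lies in support'
  have key : ∀ p : X × Y, p ∈ Support v A B → (f p.1, g p.2) ∈ Support v' A' B' := by
    rintro ⟨x, y⟩ ⟨hxA, hyB, hne⟩
    have hne' : v' (f x, g y) ≠ 0 := by rw [← hcomm]; exact hne
    have hfx : f x ∈ A' ∪ {0} := by
      rw [← hfA]; exact ⟨x, Or.inl hxA, rfl⟩
    have hgy : g y ∈ B' ∪ {0} := by
      rw [← hgB]; exact ⟨y, Or.inl hyB, rfl⟩
    have hfx' : f x ∈ A' := by
      rcases hfx with h | h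
      · exact h
      · exact absurd (hv' (f x, g y) (Or.inl h)) hne'
    have hgy' : g y ∈ B' := by
      rcases hgy with h | h
      · exact h
      · exact absurd (hv' (f x, g y) (Or.inr h)) hne'
    exact ⟨hfx', hgy', hne'⟩
  -- key': preimage of support' point lifts
  have key' : ∀ p : X' × Y', p ∈ Support v' A' B' →
      ∃ x y, (x, y) ∈ Support v A B ∧ f x = p.1 ∧ g y = p.2 := by
    rintro ⟨x', y'⟩ ⟨hxA', hyB', hne'⟩
    have hx : x' ∈ f '' (A ∪ {0}) := by rw [hfA]; exact Or.inl hxA'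
    have hy : y' ∈ g '' (B ∪ {0}) := by rw [hgB]; exact Or.inl hyB'
    obtain ⟨x, hxm, hxe⟩ := hx
    obtain ⟨y, hym, hye⟩ := hy
    have hxA : x ∈ A := by
      rcases hxm with h | h
      · exact h
      · exact absurd (hxe ▸ h ▸ hf0) (hA' hxA')
    have hyB : y ∈ B := by
      rcases hym with h | h
      · exact h
      · exact absurd (hye ▸ h ▸ hg0) (hB' hyB')
    refine ⟨x, y, ⟨hxA, hyB, ?_⟩, hxe, hye⟩
    rw [hcomm, hxe, hye]; exact hne'
  obtain ⟨⟨sx, sy⟩, hs⟩ := hS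
  obtain ⟨⟨sx', sy'⟩, hs'⟩ := hS'
  refine ⟨⟨⟨sx, sy, hs⟩, ⟨sy, sx, hs⟩, ?_, ?_⟩,
    ⟨⟨sx', sy', hs'⟩, ⟨sy', sx', hs'⟩, ?_, ?_⟩, ?_, ?_, ?_, ?_, ?_⟩
  · rintro x ⟨y, hy⟩; exact ⟨y, ⟨x, hy⟩, hy.2.2⟩
  · rintro y ⟨x, hx⟩; exact ⟨x, ⟨y, hx⟩, hx.2.2⟩
  · rintro x ⟨y, hy⟩; exact ⟨y, ⟨x, hy⟩, hy.2.2⟩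
  · rintro y ⟨x, hx⟩; exact ⟨x, ⟨y, hx⟩, hx.2.2⟩
  · rintro x ⟨y, hy⟩; exact ⟨g y, key (x, y) hy⟩
  · rintro x' ⟨y', hy'⟩
    obtain ⟨x, y, hm, hfx, hgy⟩ := key' (x', y') hy'
    exact ⟨x, ⟨y, hm⟩, hfx⟩
  · rintro y ⟨x, hx⟩; exact ⟨f x, key (x, y) hx⟩
  · rintro y' ⟨x', hx'⟩
    obtain ⟨x, y, hm, hfx, hgy⟩ := key' (x', y') hx'
    exact ⟨y, ⟨x, hm⟩, hgy⟩
  · intro x _ y _; exact (hcomm x y).symm
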